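/- Let w be a weight on ℝ^d, G ⊂ ℝ^d with 0 < w(G) < ∞, and let S be a sparse collection of dyadic cubes such that every Q ∈ S satisfies ⟨f⟩_Q ≤ 3^d · 4 · w(G)^{-1}, where f is a bounded compactly supported function. For k ≥ −1 let S_k := {Q ∈ S : ⟨f⟩_Q ≃ 4^{-k} w(G)^{-1}} (i.e., 4^{-k-1} w(G)^{-1} < ⟨f⟩_Q ≤ 4^{-k} w(G)^{-1}). Then for each fixed k, Σ_{Q∈S_k} ⟨f⟩_Q w(Q) ≲ ∫_{ℝ^d} |f(y)| Mw(y) dy, where M is the Hardy–Littlewood maximal function, with implicit constant independent of k, f, w, G. -/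

import Mathlib

open MeasureTheory ENNReal Set

noncomputable section

/-- An axis-parallel half-open cube in `ℝ^d`. -/
structure Cube (d : ℕ) where
  corner : Fin d → ℝ
  side : ℝ
  side_pos : 0 < side

/-- The underlying set of a cube. -/
def Cube.toSet {d : ℕ} (Q : Cube d) : Set (Fin d → ℝ) :=
  {x | ∀ i, Q.corner i ≤ x i ∧ x i < Q.corner i + Q.side}

/-- A dyadic lattice of `ℝ^d`: a collection of cubes whose sidelengths are integer
powers of `2`, in which any two cubes are nested or disjoint, and in which every
cube has a parent of twice its sidelength. -/
def IsDyadicLattice {d : ℕ} (D : Set (Cube d)) : Prop :=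
  (∀ Q ∈ D, ∃ k : ℤ, Q.side = 2 ^ k) ∧
  (∀ Q ∈ D, ∀ Q' ∈ D,
    Q.toSet ⊆ Q'.toSet ∨ Q'.toSet ⊆ Q.toSet ∨ Disjoint Q.toSet Q'.toSet) ∧
  (∀ Q ∈ D, ∃ Q' ∈ D, Q.toSet ⊆ Q'.toSet ∧ Q'.side = 2 * Q.side)

/-- A collection `S` of cubes is sparse if for every `Q ∈ S` there is a measurable
`E_Q ⊆ Q` with `|E_Q| > ½ |Q|`, the sets `{E_Q : Q ∈ S}` being pairwise disjoint. -/
def IsSparse {d : ℕ} (S : Set (Cube d)) : Prop :=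
  ∃ E : Cube d → Set (Fin d → ℝ),
    (∀ Q ∈ S, MeasurableSet (E Q)) ∧
    (∀ Q ∈ S, E Q ⊆ Q.toSet) ∧
    (∀ Q ∈ S, volume Q.toSet < 2 * volume (E Q)) ∧
    S.PairwiseDisjoint E

/-- `⟨f⟩_Q = (1/|Q|) ∫_Q |f|`, valued in `ℝ≥0∞`. -/
def avg {d : ℕ} (f : (Fin d → ℝ) → ℝ) (Q : Cube d) : ℝ≥0∞ :=
  (∫⁻ y in Q.toSet, ENNReal.ofReal |f y|) / volume Q.toSet

/-- `w(A) = ∫_A w` for a weight `w`. -/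
def wInt {d : ℕ} (w : (Fin d → ℝ) → ℝ) (A : Set (Fin d → ℝ)) : ℝ≥0∞ :=
  ∫⁻ y in A, ENNReal.ofReal (w y)

/-- The Hardy–Littlewood maximal function (over all cubes). -/
def hlMax {d : ℕ} (f : (Fin d → ℝ) → ℝ) (x : Fin d → ℝ) : ℝ≥0∞ :=
  ⨆ (Q : Cube d) (_ : x ∈ Q.toSet), avg f Q

/-- `log t = log₂ (2 + t)`, extended to `ℝ≥0∞` by `log ∞ = ∞`. -/
def elog (t : ℝ≥0∞) : ℝ≥0∞ :=
  if t = ∞ then ∞ else ENNReal.ofReal (Real.logb 2 (2 + t.toReal))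

/-- `ρ_w(Q) = (1/w(Q)) ∫_Q M(1_Q w)`. -/
def rho {d : ℕ} (w : (Fin d → ℝ) → ℝ) (Q : Cube d) : ℝ≥0∞ :=
  (∫⁻ x in Q.toSet, hlMax (Q.toSet.indicator w) x) / wInt w Q.toSet

/-- A bounded, compactly supported (measurable) function. -/
def BCS {d : ℕ} (f : (Fin d → ℝ) → ℝ) : Prop :=
  Measurable f ∧ (∃ C : ℝ, ∀ x, |f x| ≤ C) ∧ HasCompactSupport f

/-- `T` admits a sparse bilinear domination: for all bounded compactly supported
`f₁, f₂` there are `3^d` sparse collections, each contained in a dyadic lattice, with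
`|⟨T f₁, f₂⟩| ≲ ∑_k ∑_{Q ∈ S_k} |Q| ⟨f₁⟩_Q ⟨f₂⟩_Q`. -/
def HasSparseDomination {d : ℕ} (T : ((Fin d → ℝ) → ℝ) → (Fin d → ℝ) → ℝ) : Prop :=
  ∃ Cd : ℝ, 0 < Cd ∧ ∀ f₁ f₂ : (Fin d → ℝ) → ℝ, BCS f₁ → BCS f₂ →
    ∃ S : Fin (3 ^ d) → Set (Cube d),
      (∀ k, ∃ D, IsDyadicLattice D ∧ S k ⊆ D) ∧
      (∀ k, IsSparse (S k)) ∧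
      ENNReal.ofReal |∫ x, T f₁ x * f₂ x| ≤
        ENNReal.ofReal Cd * ∑ k : Fin (3 ^ d), ∑' Q : S k,
          volume (Q : Cube d).toSet * avg f₁ (Q : Cube d) * avg f₂ (Q : Cube d)

/-!
Write `ν = |f| dx` and `a = 4^(-k-1) w(G)⁻¹`, so that `a |Q| < ν(Q) ≤ 4a |Q|` on the level
set `S_k`. Sparseness gives the packing bound `∑_{R ∈ S_k, R ⊆ Q} |R| ≤ 2|Q|`. Let the depth of
`Q` be the number of cubes of `S_k` containing `Q` (finite, since `|R| ≤ ν(ℝ^d)/a` for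
`R ∈ S_k`), and let `D_Q` be the union of the cubes of `S_k` inside `Q` whose depth exceeds that
of `Q` by at least 16. Every point of `D_Q` lies in at least 16 cubes of `S_k` inside `Q`, so
`16 ν(D_Q) ≤ ∑_{R ⊆ Q} ν(R) ≤ 4a ∑_{R ⊆ Q} |R| ≤ 8a|Q| ≤ 8 ν(Q)`, and the major part
`F_Q = Q \ D_Q` carries at least half of `ν(Q)`. Since `⟨w⟩_Q ≤ Mw` on `Q`,
`⟨f⟩_Q w(Q) = ν(Q) ⟨w⟩_Q ≤ 2 ∫_{F_Q} |f| Mw`, and the sets `F_Q` are pairwise disjoint within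
each residue class of the depth modulo 16; summing gives the bound with constant `32`.
-/

section Counting

variable {X : Type*} [MeasurableSpace X]

theorem nat_mul_measure_le_tsum_of_forall_finite_cover {ι : Type*} (ρ : Measure X)
    {t : ι → Set X} {D : Set ι} (hD : D.Countable) (ht : ∀ i ∈ D, MeasurableSet (t i))
    {A : Set X} {n : ℕ}
    (hA : ∀ x ∈ A, ∃ T ⊆ D, T.Finite ∧ n ≤ T.ncard ∧ ∀ i ∈ T, x ∈ t i) :
    n * ρ A ≤ ∑' i : D, ρ (t i) := by
  have := hD.to_subtype
  set mult : X → ℝ≥0∞ := fun x => ∑' i : D, (t i).indicator 1 x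
  have hA_mult : A ⊆ {x | (n : ℝ≥0∞) ≤ mult x} := by
    intro x hx
    obtain ⟨T, hTD, hT, hnT, hxT⟩ := hA x hx
    calc (n : ℝ≥0∞) ≤ T.ncard := by exact_mod_cast hnT
      _ = ∑ i ∈ hT.toFinset, D.indicator (fun i => (t i).indicator 1 x) i := by
        rw [Set.ncard_eq_toFinset_card T hT, Finset.cast_card]
        refine Finset.sum_congr rfl fun i hi => ?_
        rw [hT.mem_toFinset] at hi
        simp [Set.indicator_of_mem (hTD hi), Set.indicator_of_mem (hxT i hi)]
      _ ≤ mult x := (ENNReal.sum_le_tsum _).trans_eq (tsum_subtype D _).symm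
  have hmeas : ∀ i : D, Measurable ((t i).indicator (1 : X → ℝ≥0∞)) :=
    fun i => measurable_one.indicator (ht i i.2)
  calc n * ρ A ≤ n * ρ {x | (n : ℝ≥0∞) ≤ mult x} := by gcongr
    _ ≤ ∫⁻ x, mult x ∂ρ :=
      mul_meas_ge_le_lintegral₀ (AEMeasurable.tsum fun i => (hmeas i).aemeasurable) _
    _ = ∑' i : D, ρ (t i) := by
      rw [lintegral_tsum fun i => (hmeas i).aemeasurable]
      exact tsum_congr fun i => lintegral_indicator_one (ht i i.2)

theorem tsum_setLIntegral_le_of_coloring {ι : Type*} [Countable ι] {μ : Measure X} {n : ℕ}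
    {F : ι → Set X} (hF : ∀ i, MeasurableSet (F i)) (c : ι → Fin n)
    (hc : ∀ i j, i ≠ j → c i = c j → Disjoint (F i) (F j)) (h : X → ℝ≥0∞) :
    ∑' i, ∫⁻ x in F i, h x ∂μ ≤ n * ∫⁻ x, h x ∂μ := by
  have hclass : ∀ b, ∑' i : {i // c i = b}, ∫⁻ x in F i, h x ∂μ ≤ ∫⁻ x, h x ∂μ := by
    intro b
    have hdisj : Pairwise (Function.onFun Disjoint fun i : {i // c i = b} => F i) := fun i j hij =>
      hc i j (Subtype.coe_injective.ne hij) (i.property.trans j.property.symm)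
    rw [← lintegral_iUnion (fun i : {i // c i = b} => hF i) hdisj]
    exact setLIntegral_le_lintegral _ _
  calc ∑' i, ∫⁻ x in F i, h x ∂μ
      = ∑' b, ∑' i : {i // c i = b}, ∫⁻ x in F i, h x ∂μ := by
        rw [← (Equiv.sigmaFiberEquiv c).tsum_eq, ENNReal.tsum_sigma']
        rfl
    _ ≤ ∑' _ : Fin n, ∫⁻ x, h x ∂μ := ENNReal.tsum_le_tsum hclass
    _ = n * ∫⁻ x, h x ∂μ := by simp

end Counting

structure IsNestedSparse {X ι : Type*} [MeasurableSpace X] (μ : Measure X) (s : ι → Set X)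
    (S : Set ι) (E : ι → Set X) : Prop where
  measurableSet : ∀ i ∈ S, MeasurableSet (s i)
  nested_or_disjoint : ∀ i ∈ S, ∀ j ∈ S, s i ⊆ s j ∨ s j ⊆ s i ∨ Disjoint (s i) (s j)
  measurableSet_sparse : ∀ i ∈ S, MeasurableSet (E i)
  sparse_subset : ∀ i ∈ S, E i ⊆ s i
  measure_lt_two_mul : ∀ i ∈ S, μ (s i) < 2 * μ (E i)
  pairwiseDisjoint : S.PairwiseDisjoint E

namespace IsNestedSparse

section

variable {X ι : Type*} {s : ι → Set X} {S : Set ι}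

def ancestors (s : ι → Set X) (S : Set ι) (i : ι) : Set ι := {j | j ∈ S ∧ s i ⊆ s j}

def descendants (s : ι → Set X) (S : Set ι) (i : ι) : Set ι := {j | j ∈ S ∧ s j ⊆ s i}

-- `ncard` is `0` on infinite sets; the lemmas below assume finitely many ancestors.
def depth (s : ι → Set X) (S : Set ι) (i : ι) : ℕ := (ancestors s S i).ncard

def deepPart (s : ι → Set X) (S : Set ι) (n : ℕ) (i : ι) : Set X :=
  ⋃ j ∈ {j | j ∈ descendants s S i ∧ depth s S i + n ≤ depth s S j}, s j

def majorPart (s : ι → Set X) (S : Set ι) (n : ℕ) (i : ι) : Set X :=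
  s i \ deepPart s S n i

theorem ancestors_subset_ancestors {i j : ι} (h : s i ⊆ s j) :
    ancestors s S j ⊆ ancestors s S i :=
  fun _ hk => ⟨hk.1, h.trans hk.2⟩

theorem depth_lt_depth {i j : ι} (hj : j ∈ S) (hfin : (ancestors s S j).Finite)
    (h : s j ⊂ s i) : depth s S i < depth s S j :=
  ncard_lt_ncard ((ssubset_iff_of_subset (ancestors_subset_ancestors h.subset)).2
    ⟨j, ⟨hj, subset_rfl⟩, fun hj' => h.not_subset hj'.2⟩) hfin

end

variable {X ι : Type*} [MeasurableSpace X] {μ : Measure X} {s E : ι → Set X} {S : Set ι}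

theorem mono (hS : IsNestedSparse μ s S E) {T : Set ι} (hT : T ⊆ S) :
    IsNestedSparse μ s T E where
  measurableSet i hi := hS.measurableSet i (hT hi)
  nested_or_disjoint i hi j hj := hS.nested_or_disjoint i (hT hi) j (hT hj)
  measurableSet_sparse i hi := hS.measurableSet_sparse i (hT hi)
  sparse_subset i hi := hS.sparse_subset i (hT hi)
  measure_lt_two_mul i hi := hS.measure_lt_two_mul i (hT hi)
  pairwiseDisjoint := hS.pairwiseDisjoint.subset hT

theorem measure_sparse_pos (hS : IsNestedSparse μ s S E) {i : ι} (hi : i ∈ S) :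
    0 < μ (E i) := by
  refine pos_iff_ne_zero.2 fun h => ?_
  simpa [h] using hS.measure_lt_two_mul i hi

theorem measure_pos (hS : IsNestedSparse μ s S E) {i : ι} (hi : i ∈ S) : 0 < μ (s i) :=
  (hS.measure_sparse_pos hi).trans_le (measure_mono (hS.sparse_subset i hi))

theorem nonempty (hS : IsNestedSparse μ s S E) {i : ι} (hi : i ∈ S) : (s i).Nonempty :=
  nonempty_of_measure_ne_zero (hS.measure_pos hi).ne'

theorem injOn (hS : IsNestedSparse μ s S E) : S.InjOn s := by
  intro i hi j hj hij
  by_contra hne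
  have hunion : μ (E i) + μ (E j) ≤ μ (s i) := by
    rw [← measure_union (hS.pairwiseDisjoint hi hj hne) (hS.measurableSet_sparse j hj)]
    exact measure_mono (union_subset (hS.sparse_subset i hi) (hij ▸ hS.sparse_subset j hj))
  have := ENNReal.add_lt_add (hS.measure_lt_two_mul i hi) (hij ▸ hS.measure_lt_two_mul j hj)
  rw [← mul_add] at this
  exact (this.trans_le (by gcongr)).ne (two_mul _).symm

theorem subset_or_subset_of_subset (hS : IsNestedSparse μ s S E) {i j k : ι} (hi : i ∈ S)
    (hj : j ∈ S) (hk : k ∈ S) (hki : s k ⊆ s i) (hkj : s k ⊆ s j) : s i ⊆ s j ∨ s j ⊆ s i := by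
  obtain ⟨x, hx⟩ := hS.nonempty hk
  rcases hS.nested_or_disjoint i hi j hj with h | h | h
  · exact .inl h
  · exact .inr h
  · exact absurd (hki hx) (h.notMem_of_mem_right (hkj hx))

theorem countable [SFinite μ] (hS : IsNestedSparse μ s S E) : S.Countable := by
  have h := Measure.countable_meas_pos_of_disjoint_iUnion (μ := μ)
    (fun i : S => hS.measurableSet_sparse i i.2)
    (fun i j hij => hS.pairwiseDisjoint i.2 j.2 (Subtype.coe_injective.ne hij))
  rw [show {i : S | 0 < μ (E i)} = univ from eq_univ_of_forall fun i => hS.measure_sparse_pos i.2]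
    at h
  exact countable_coe_iff.1 (countable_univ_iff.1 h)

theorem tsum_measure_le_two_mul (hS : IsNestedSparse μ s S E) {A : Set X}
    (hA : ∀ i ∈ S, s i ⊆ A) : ∑' i : S, μ (s i) ≤ 2 * μ A :=
  calc ∑' i : S, μ (s i) ≤ ∑' i : S, 2 * μ (E i) :=
        ENNReal.tsum_le_tsum fun i => (hS.measure_lt_two_mul i i.2).le
    _ ≤ 2 * μ (⋃ i : S, E i) := by
        rw [ENNReal.tsum_mul_left]
        gcongr
        exact tsum_meas_le_meas_iUnion_of_disjoint μ (fun i => hS.measurableSet_sparse i i.2)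
          fun i j hij => hS.pairwiseDisjoint i.2 j.2 (Subtype.coe_injective.ne hij)
    _ ≤ 2 * μ A := by
        gcongr
        exact iUnion_subset fun i => (hS.sparse_subset i i.2).trans (hA i i.2)

theorem finite_ancestors [SFinite μ] (hS : IsNestedSparse μ s S E) {B : ℝ≥0∞} (hB : B ≠ ∞)
    (hSB : ∀ i ∈ S, μ (s i) ≤ B) {i : ι} (hi : i ∈ S) : (ancestors s S i).Finite := by
  -- The ancestors form a chain, so their union has measure `≤ B`, and packing bounds the sum
  -- of their measures, each of which is at least `μ (s i) > 0`.
  set A := ancestors s S i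
  have hAS : A ⊆ S := fun j hj => hj.1
  have := ((hS.mono hAS).countable).to_subtype
  have hdir : Directed (· ⊆ ·) (fun j : A => s j) := by
    intro j k
    rcases hS.subset_or_subset_of_subset j.2.1 k.2.1 hi j.2.2 k.2.2 with h | h
    · exact ⟨k, h, subset_rfl⟩
    · exact ⟨j, subset_rfl, h⟩
  have hsum : ∑' j : A, μ (s j) ≤ 2 * B :=
    calc ∑' j : A, μ (s j) ≤ 2 * μ (⋃ j : A, s j) :=
          (hS.mono hAS).tsum_measure_le_two_mul fun j hj =>
            subset_iUnion (fun j : A => s j) ⟨j, hj⟩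
      _ ≤ 2 * B := by
          rw [hdir.measure_iUnion]
          gcongr
          exact iSup_le fun j => hSB j j.2.1
  have hfin := ENNReal.finite_const_le_of_tsum_ne_top (ne_top_of_le_ne_top (by finiteness) hsum)
    (hS.measure_pos hi).ne'
  rw [show {j : A | μ (s i) ≤ μ (s j)} = univ from
    eq_univ_of_forall fun j => measure_mono j.2.2] at hfin
  exact finite_coe_iff.1 (finite_univ_iff.1 hfin)

theorem exists_cover_of_mem_deepPart (hS : IsNestedSparse μ s S E)
    (hfin : ∀ j ∈ S, (ancestors s S j).Finite) {n : ℕ} {i : ι} (hi : i ∈ S) {x : X}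
    (hx : x ∈ deepPart s S n i) :
    ∃ T ⊆ descendants s S i, T.Finite ∧ n ≤ T.ncard ∧ ∀ k ∈ T, x ∈ s k := by
  obtain ⟨j, ⟨⟨hj, hji⟩, hdepth⟩, hxj⟩ := mem_iUnion₂.1 hx
  refine ⟨ancestors s S j \ ancestors s S i, ?_, (hfin j hj).sdiff, ?_, fun k hk => hk.1.2 hxj⟩
  · rintro k ⟨⟨hk, hjk⟩, hik⟩
    refine ⟨hk, ?_⟩
    rcases hS.subset_or_subset_of_subset hk hi hj hjk hji with h | h
    · exact h
    · exact absurd ⟨hk, h⟩ hik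
  · rw [ncard_sdiff (ancestors_subset_ancestors hji) (hfin i hi)]
    unfold depth at hdepth
    omega

theorem measurableSet_deepPart [SFinite μ] (hS : IsNestedSparse μ s S E) (n : ℕ) (i : ι) :
    MeasurableSet (deepPart s S n i) :=
  MeasurableSet.biUnion (hS.countable.mono fun _ hj => hj.1.1) fun j hj => hS.measurableSet j hj.1.1

theorem measurableSet_majorPart [SFinite μ] (hS : IsNestedSparse μ s S E) (n : ℕ) {i : ι}
    (hi : i ∈ S) : MeasurableSet (majorPart s S n i) :=
  (hS.measurableSet i hi).diff (hS.measurableSet_deepPart n i)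

theorem mul_measure_deepPart_le [SFinite μ] (hS : IsNestedSparse μ s S E)
    (hfin : ∀ j ∈ S, (ancestors s S j).Finite) (ρ : Measure X) (n : ℕ) {i : ι} (hi : i ∈ S) :
    n * ρ (deepPart s S n i) ≤ ∑' j : descendants s S i, ρ (s j) :=
  nat_mul_measure_le_tsum_of_forall_finite_cover ρ (hS.countable.mono fun _ hj => hj.1)
    (fun j hj => hS.measurableSet j hj.1) fun _ hx => hS.exists_cover_of_mem_deepPart hfin hi hx

theorem disjoint_majorPart (hS : IsNestedSparse μ s S E)
    (hfin : ∀ j ∈ S, (ancestors s S j).Finite) {n : ℕ} {i j : ι} (hi : i ∈ S) (hj : j ∈ S)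
    (hij : i ≠ j) (hmod : depth s S i ≡ depth s S j [MOD n]) :
    Disjoint (majorPart s S n i) (majorPart s S n j) := by
  wlog h : s j ⊆ s i generalizing i j
  · rcases hS.nested_or_disjoint i hi j hj with h' | h' | h'
    · exact (this hj hi hij.symm hmod.symm h').symm
    · exact absurd h' h
    · exact h'.mono sdiff_subset sdiff_subset
  have hlt : depth s S i < depth s S j :=
    depth_lt_depth hj (hfin j hj) (h.ssubset_of_ne fun he => hij (hS.injOn hi hj he.symm))
  have hgap : depth s S i + n ≤ depth s S j := by
    have := Nat.le_of_dvd (Nat.sub_pos_of_lt hlt) ((Nat.modEq_iff_dvd' hlt.le).1 hmod)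
    omega
  have hdeep : s j ⊆ deepPart s S n i :=
    subset_biUnion_of_mem (u := s) (show j ∈ _ from ⟨⟨hj, h⟩, hgap⟩)
  exact disjoint_sdiff_left.mono_right (sdiff_subset.trans hdeep)

theorem tsum_setLIntegral_majorPart_le [SFinite μ] (hS : IsNestedSparse μ s S E)
    (hfin : ∀ j ∈ S, (ancestors s S j).Finite) {n : ℕ} (hn : 0 < n) (ρ : Measure X)
    (h : X → ℝ≥0∞) :
    ∑' i : S, ∫⁻ x in majorPart s S n i, h x ∂ρ ≤ n * ∫⁻ x, h x ∂ρ :=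
  have := hS.countable.to_subtype
  tsum_setLIntegral_le_of_coloring (fun i : S => hS.measurableSet_majorPart n i.2)
    (fun i => ⟨depth s S i % n, Nat.mod_lt _ hn⟩)
    (fun i j hij hc => hS.disjoint_majorPart hfin i.2 j.2 (Subtype.coe_injective.ne hij)
      (congrArg Fin.val hc)) h

theorem finite_ancestors_of_le_measure [SFinite μ] (hS : IsNestedSparse μ s S E)
    {ν : Measure X} [IsFiniteMeasure ν] {a : ℝ≥0∞} (ha : a ≠ 0)
    (hlow : ∀ i ∈ S, a * μ (s i) ≤ ν (s i)) {i : ι} (hi : i ∈ S) :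
    (ancestors s S i).Finite :=
  hS.finite_ancestors (ENNReal.div_lt_top (measure_ne_top ν univ) ha).ne
    (fun j hj => (ENNReal.le_div_iff_mul_le (.inl ha) (.inr (measure_ne_top ν univ))).2
      (by rw [mul_comm]; exact (hlow j hj).trans (measure_mono (subset_univ _)))) hi

theorem measure_le_two_mul_majorPart [SFinite μ] (hS : IsNestedSparse μ s S E)
    {ν : Measure X} [IsFiniteMeasure ν] {a : ℝ≥0∞} (ha : a ≠ 0)
    (hlevel : ∀ j ∈ S, a * μ (s j) ≤ ν (s j) ∧ ν (s j) ≤ 4 * a * μ (s j)) {i : ι} (hi : i ∈ S) :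
    ν (s i) ≤ 2 * ν (majorPart s S 16 i) := by
  have hfin : ∀ j ∈ S, (ancestors s S j).Finite := fun j hj =>
    hS.finite_ancestors_of_le_measure ha (fun k hk => (hlevel k hk).1) hj
  have hdesc : descendants s S i ⊆ S := fun _ hj => hj.1
  have hdeep : 8 * (2 * ν (deepPart s S 16 i)) ≤ 8 * ν (s i) :=
    calc 8 * (2 * ν (deepPart s S 16 i)) = ((16 : ℕ) : ℝ≥0∞) * ν (deepPart s S 16 i) := by
          norm_num [← mul_assoc]
      _ ≤ ∑' j : descendants s S i, ν (s j) := hS.mul_measure_deepPart_le hfin ν 16 hi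
      _ ≤ ∑' j : descendants s S i, 4 * a * μ (s j) :=
          ENNReal.tsum_le_tsum fun j => (hlevel j (hdesc j.2)).2
      _ ≤ 4 * a * (2 * μ (s i)) := by
          rw [ENNReal.tsum_mul_left]
          gcongr
          exact (hS.mono hdesc).tsum_measure_le_two_mul fun _ hj => hj.2
      _ = 8 * (a * μ (s i)) := by ring
      _ ≤ 8 * ν (s i) := by gcongr; exact (hlevel i hi).1
  replace hdeep := (ENNReal.mul_le_mul_iff_right (by norm_num) (by norm_num)).1 hdeep
  have hsplit : ν (s i) ≤ ν (majorPart s S 16 i) + ν (deepPart s S 16 i) :=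
    (measure_mono (by simp [majorPart])).trans (measure_union_le _ _)
  refine (ENNReal.add_le_add_iff_right (measure_ne_top ν (s i))).1 ?_
  calc ν (s i) + ν (s i) = 2 * ν (s i) := (two_mul _).symm
    _ ≤ 2 * ν (majorPart s S 16 i) + 2 * ν (deepPart s S 16 i) := by
        rw [← mul_add]; gcongr
    _ ≤ 2 * ν (majorPart s S 16 i) + ν (s i) := by gcongr

end IsNestedSparse

namespace Cube

variable {d : ℕ}

theorem toSet_eq_pi (Q : Cube d) :
    Q.toSet = univ.pi fun i => Ico (Q.corner i) (Q.corner i + Q.side) := by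
  ext x
  simp [Cube.toSet]

theorem measurableSet_toSet (Q : Cube d) : MeasurableSet Q.toSet := by
  rw [toSet_eq_pi]
  exact MeasurableSet.univ_pi fun _ => measurableSet_Ico

theorem volume_toSet (Q : Cube d) : volume Q.toSet = ENNReal.ofReal Q.side ^ d := by
  simp [toSet_eq_pi, volume_pi_pi, Real.volume_Ico]

theorem volume_toSet_ne_zero (Q : Cube d) : volume Q.toSet ≠ 0 := by
  simp [volume_toSet, Q.side_pos]

theorem volume_toSet_ne_top (Q : Cube d) : volume Q.toSet ≠ ∞ := by
  simp [volume_toSet]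

end Cube

theorem IsSparse.exists_isNestedSparse {d : ℕ} {S D : Set (Cube d)} (hS : IsSparse S)
    (hD : IsDyadicLattice D) (hSD : S ⊆ D) : ∃ E, IsNestedSparse volume Cube.toSet S E := by
  obtain ⟨E, hEm, hEsub, hEvol, hEdisj⟩ := hS
  exact ⟨E, fun Q _ => Q.measurableSet_toSet, fun Q hQ R hR => hD.2.1 Q (hSD hQ) R (hSD hR),
    hEm, hEsub, hEvol, hEdisj⟩

theorem BCS.lintegral_ofReal_abs_ne_top {d : ℕ} {f : (Fin d → ℝ) → ℝ} (hf : BCS f) :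
    ∫⁻ y, ENNReal.ofReal |f y| ≠ ∞ := by
  obtain ⟨hfm, ⟨C, hC⟩, hsupp⟩ := hf
  have hint : Integrable f :=
    (Measure.integrableOn_of_bounded hsupp.measure_lt_top.ne hfm.aestronglyMeasurable
      (M := C) (ae_of_all _ hC)).integrable_of_forall_notMem_eq_zero
      fun _ hx => image_eq_zero_of_notMem_tsupport hx
  simpa [Real.enorm_eq_ofReal_abs] using hint.hasFiniteIntegral.ne

section Averages

variable {d : ℕ}

theorem setLIntegral_eq_avg_mul (f : (Fin d → ℝ) → ℝ) (Q : Cube d) :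
    ∫⁻ y in Q.toSet, ENNReal.ofReal |f y| = avg f Q * volume Q.toSet :=
  (ENNReal.div_mul_cancel Q.volume_toSet_ne_zero Q.volume_toSet_ne_top).symm

theorem wInt_eq_avg_mul {w : (Fin d → ℝ) → ℝ} (hw : ∀ x, 0 ≤ w x) (Q : Cube d) :
    wInt w Q.toSet = avg w Q * volume Q.toSet := by
  rw [← setLIntegral_eq_avg_mul, wInt]
  simp_rw [abs_of_nonneg (hw _)]

theorem mul_volume_le_setLIntegral_of_le_avg {f : (Fin d → ℝ) → ℝ} {Q : Cube d} {a : ℝ≥0∞}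
    (h : a ≤ avg f Q) : a * volume Q.toSet ≤ ∫⁻ y in Q.toSet, ENNReal.ofReal |f y| := by
  rw [setLIntegral_eq_avg_mul]
  gcongr

theorem setLIntegral_le_mul_volume_of_avg_le {f : (Fin d → ℝ) → ℝ} {Q : Cube d} {b : ℝ≥0∞}
    (h : avg f Q ≤ b) : ∫⁻ y in Q.toSet, ENNReal.ofReal |f y| ≤ b * volume Q.toSet := by
  rw [setLIntegral_eq_avg_mul]
  gcongr

theorem avg_le_hlMax (w : (Fin d → ℝ) → ℝ) {Q : Cube d} {x : Fin d → ℝ} (hx : x ∈ Q.toSet) :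
    avg w Q ≤ hlMax w x :=
  le_iSup₂ (f := fun (Q : Cube d) (_ : x ∈ Q.toSet) => avg w Q) Q hx

theorem avg_mul_wInt_le_setLIntegral {f w : (Fin d → ℝ) → ℝ} (hf : Measurable f)
    (hw : ∀ x, 0 ≤ w x) {Q : Cube d} {F : Set (Fin d → ℝ)} (hF : MeasurableSet F)
    (hFQ : F ⊆ Q.toSet)
    (hmass : ∫⁻ y in Q.toSet, ENNReal.ofReal |f y| ≤ 2 * ∫⁻ y in F, ENNReal.ofReal |f y|) :
    avg f Q * wInt w Q.toSet ≤ 2 * ∫⁻ y in F, ENNReal.ofReal |f y| * hlMax w y :=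
  calc avg f Q * wInt w Q.toSet = (∫⁻ y in Q.toSet, ENNReal.ofReal |f y|) * avg w Q := by
        rw [wInt_eq_avg_mul hw, setLIntegral_eq_avg_mul]; ring
    _ ≤ 2 * ∫⁻ y in F, ENNReal.ofReal |f y| * avg w Q := by
        rw [lintegral_mul_const _ hf.abs.ennreal_ofReal, ← mul_assoc]
        gcongr
    _ ≤ 2 * ∫⁻ y in F, ENNReal.ofReal |f y| * hlMax w y := by
        gcongr 2 * ?_
        exact setLIntegral_mono' hF fun y hy => mul_le_mul_right (avg_le_hlMax w (hFQ hy)) _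

end Averages

theorem tsum_avg_mul_wInt_le_of_level {d : ℕ} {S D : Set (Cube d)} (hD : IsDyadicLattice D)
    (hSD : S ⊆ D) (hS : IsSparse S) {f w : (Fin d → ℝ) → ℝ} (hf : BCS f) (hw : ∀ x, 0 ≤ w x)
    {a : ℝ≥0∞} (ha : a ≠ 0) :
    ∑' Q : {Q : Cube d // Q ∈ S ∧ a < avg f Q ∧ avg f Q ≤ 4 * a},
        avg f (Q : Cube d) * wInt w (Q : Cube d).toSet ≤
      32 * ∫⁻ y, ENNReal.ofReal |f y| * hlMax w y := by
  obtain ⟨E, hE⟩ := hS.exists_isNestedSparse hD hSD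
  set L := {Q : Cube d | Q ∈ S ∧ a < avg f Q ∧ avg f Q ≤ 4 * a}
  have hL : IsNestedSparse volume Cube.toSet L E := hE.mono fun Q hQ => hQ.1
  set ν := volume.withDensity fun y => ENNReal.ofReal |f y|
  have : IsFiniteMeasure ν := isFiniteMeasure_withDensity hf.lintegral_ofReal_abs_ne_top
  have hν : ∀ A, MeasurableSet A → ν A = ∫⁻ y in A, ENNReal.ofReal |f y| :=
    fun A hA => withDensity_apply _ hA
  have hlevel : ∀ Q ∈ L, a * volume Q.toSet ≤ ν Q.toSet ∧ ν Q.toSet ≤ 4 * a * volume Q.toSet := by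
    intro Q ⟨_, hlow, hup⟩
    rw [hν _ Q.measurableSet_toSet]
    exact ⟨mul_volume_le_setLIntegral_of_le_avg hlow.le, setLIntegral_le_mul_volume_of_avg_le hup⟩
  have hfin : ∀ Q ∈ L, (IsNestedSparse.ancestors Cube.toSet L Q).Finite := fun Q hQ =>
    hL.finite_ancestors_of_le_measure ha (fun R hR => (hlevel R hR).1) hQ
  set F := IsNestedSparse.majorPart Cube.toSet L 16
  calc ∑' Q : L, avg f Q * wInt w (Q : Cube d).toSet
      ≤ ∑' Q : L, 2 * ∫⁻ y in F Q, ENNReal.ofReal |f y| * hlMax w y := by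
        refine ENNReal.tsum_le_tsum fun Q => avg_mul_wInt_le_setLIntegral hf.1 hw
          (hL.measurableSet_majorPart 16 Q.2) sdiff_subset ?_
        rw [← hν _ Q.1.measurableSet_toSet, ← hν _ (hL.measurableSet_majorPart 16 Q.2)]
        exact hL.measure_le_two_mul_majorPart ha hlevel Q.2
    _ ≤ 2 * (16 * ∫⁻ y, ENNReal.ofReal |f y| * hlMax w y) := by
        rw [ENNReal.tsum_mul_left]
        gcongr
        exact_mod_cast hL.tsum_setLIntegral_majorPart_le hfin (by norm_num) volume _
    _ = 32 * ∫⁻ y, ENNReal.ofReal |f y| * hlMax w y := by ring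

theorem sparse_level_set_sum_le_general {d : ℕ} :
    ∃ C : ℝ≥0∞, 0 < C ∧ C < ∞ ∧
      ∀ w : (Fin d → ℝ) → ℝ, Measurable w → (∀ x, 0 ≤ w x) →
        ∀ G : Set (Fin d → ℝ), 0 < wInt w G → wInt w G < ∞ →
          ∀ S : Set (Cube d), (∃ D, IsDyadicLattice D ∧ S ⊆ D) → IsSparse S →
            ∀ f : (Fin d → ℝ) → ℝ, BCS f →
              (∀ Q ∈ S, avg f Q ≤ 3 ^ d * 4 * (wInt w G)⁻¹) →
              ∀ k : ℤ, -1 ≤ k →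
                (∑' Q : {Q : Cube d // Q ∈ S ∧
                    (4 : ℝ≥0∞) ^ (-k - 1) * (wInt w G)⁻¹ < avg f Q ∧
                    avg f Q ≤ (4 : ℝ≥0∞) ^ (-k) * (wInt w G)⁻¹},
                  avg f (Q : Cube d) * wInt w (Q : Cube d).toSet) ≤
                  C * ∫⁻ y, ENNReal.ofReal |f y| * hlMax w y := by
  refine ⟨32, by norm_num, by norm_num, ?_⟩
  intro w _ hw G _ hG S ⟨D, hD, hSD⟩ hS f hf _ k _
  have h4 : (4 : ℝ≥0∞) ^ (-k) * (wInt w G)⁻¹ = 4 * (4 ^ (-k - 1) * (wInt w G)⁻¹) := by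
    have := ENNReal.zpow_add (x := 4) (by norm_num) (by norm_num) 1 (-k - 1)
    rw [zpow_one, show 1 + (-k - 1) = -k by ring] at this
    rw [this, mul_assoc]
  rw [h4]
  exact tsum_avg_mul_wInt_le_of_level hD hSD hS hf hw
    (mul_ne_zero (ENNReal.zpow_pos (by norm_num) (by norm_num) _).ne' (ENNReal.inv_ne_zero.2 hG.ne))

/-- **Claim.** Let `w` be a weight, `G` with `0 < w(G) < ∞`, `f` bounded and compactly
supported, and `S` a sparse collection of dyadic cubes with `⟨f⟩_Q ≤ 3^d · 4 · w(G)⁻¹`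
for all `Q ∈ S`. For `k ≥ -1` let `S_k = {Q ∈ S : 4^{-k-1} w(G)⁻¹ < ⟨f⟩_Q ≤ 4^{-k} w(G)⁻¹}`.
Then, with a constant independent of `k, f, w, G`,
`∑_{Q ∈ S_k} ⟨f⟩_Q w(Q) ≲ ∫ |f| Mw`. -/
theorem sparse_level_set_sum_le {d : ℕ} (hd : 0 < d) :
    ∃ C : ℝ≥0∞, 0 < C ∧ C < ∞ ∧
      ∀ w : (Fin d → ℝ) → ℝ, Measurable w → (∀ x, 0 ≤ w x) →
        ∀ G : Set (Fin d → ℝ), 0 < wInt w G → wInt w G < ∞ →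
          ∀ S : Set (Cube d), (∃ D, IsDyadicLattice D ∧ S ⊆ D) → IsSparse S →
            ∀ f : (Fin d → ℝ) → ℝ, BCS f →
              (∀ Q ∈ S, avg f Q ≤ 3 ^ d * 4 * (wInt w G)⁻¹) →
              ∀ k : ℤ, -1 ≤ k →
                (∑' Q : {Q : Cube d // Q ∈ S ∧
                    (4 : ℝ≥0∞) ^ (-k - 1) * (wInt w G)⁻¹ < avg f Q ∧
                    avg f Q ≤ (4 : ℝ≥0∞) ^ (-k) * (wInt w G)⁻¹},
                  avg f (Q : Cube d) * wInt w (Q : Cube d).toSet) ≤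
                  C * ∫⁻ y, ENNReal.ofReal |f y| * hlMax w y :=
  sparse_level_set_sum_le_general
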